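/- Let m² > 0 and λ < 0. Suppose a sequence f : ℕ → ℝ has f_{j₀} ≠ 0 for some index j₀ with c_{j₀} ≠ 0. Then there exist indices (directions) in which the second variation of S(f) = (1/2)Σ f_j²(a_j + m²) + (λ/4!)Σ f_j⁴ c_j² is strictly positive and strictly negative respectively; concretely, for an extremal sequence f with f_{j₀}² = -3!(a_{j₀}+m²)/(λ c_{j₀}²), the second derivative of t ↦ S(f + t e_{j₀}) at t = 0 equals -2(a_{j₀}+m²) < 0, while for any index k with f_k = 0 the second derivative of t ↦ S(f + t e_k) at t = 0 equals a_k + m² > 0. -/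

import Mathlib

/-!
Along a coordinate line `t ↦ f + t • eᵢ` only the `i`-th mode of the action changes, so the
second variation in direction `eᵢ` is the second derivative of the one-mode quartic
`y ↦ (aᵢ + m²) y² / 2 + λ cᵢ² y⁴ / 24` at `y = fᵢ`, namely `aᵢ + m² + λ cᵢ² fᵢ² / 2`.
At an unoccupied mode this is `aᵢ + m² > 0`; at a nontrivial extremal mode the extremality
relation `λ cᵢ² fᵢ² = -6 (aᵢ + m²)` turns it into `-2 (aᵢ + m²) < 0`.
-/

noncomputable def boulatovAction {ι : Type*} (a c : ι → ℝ) (m2 lam : ℝ) (f : ι → ℝ) : ℝ :=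
  (1 / 2) * ∑ᶠ j, f j ^ 2 * (a j + m2) + (lam / 24) * ∑ᶠ j, f j ^ 4 * c j ^ 2

theorem finsum_comp_add_mul_single {ι R M : Type*} [DecidableEq ι] [Semiring R]
    [AddCommGroup M] (φ : ι → R → M) (hφ : ∀ j, φ j 0 = 0) {f : ι → R}
    (hf : f.support.Finite) (i : ι) (t : R) :
    ∑ᶠ j, φ j (f j + t * (Pi.single i 1 : ι → R) j)
      = ∑ᶠ j, φ j (f j) + (φ i (f i + t) - φ i (f i)) := by
  have hφf : (fun j ↦ φ j (f j)).support.Finite :=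
    hf.subset fun j hj hfj ↦ hj (by simp only [hfj, hφ])
  have hsplit : ∀ j, φ j (f j + t * (Pi.single i 1 : ι → R) j)
      = φ j (f j) + (Pi.single i (φ i (f i + t) - φ i (f i)) : ι → M) j := by
    intro j
    rcases eq_or_ne j i with rfl | hji <;> simp [*]
  have hsingle : (Pi.single i (φ i (f i + t) - φ i (f i)) : ι → M).support.Finite :=
    (Set.finite_singleton i).subset Pi.support_single_subset
  rw [finsum_congr hsplit, finsum_add_distrib hφf hsingle,
    finsum_eq_single (Pi.single i _ : ι → M) i fun j hji ↦ Pi.single_eq_of_ne hji _,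
    Pi.single_eq_same]

theorem iteratedDeriv_two_quadratic_add_quartic (B D x : ℝ) :
    iteratedDeriv 2 (fun y ↦ B * y ^ 2 + D * y ^ 4) x = 2 * B + 12 * D * x ^ 2 := by
  rw [iteratedDeriv_fun_add (by fun_prop) (by fun_prop), iteratedDeriv_const_mul_field,
    iteratedDeriv_const_mul_field, iteratedDeriv_pow, iteratedDeriv_pow]
  norm_num [Nat.descFactorial]
  ring

theorem iteratedDeriv_two_boulatovAction_line {ι : Type*} [DecidableEq ι] (a c : ι → ℝ)
    (m2 lam : ℝ) {f : ι → ℝ} (hf : f.support.Finite) (i : ι) :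
    iteratedDeriv 2 (fun t : ℝ ↦ boulatovAction a c m2 lam (f + t • Pi.single i 1)) 0
      = a i + m2 + lam * c i ^ 2 * f i ^ 2 / 2 := by
  set B := (a i + m2) / 2
  set D := lam * c i ^ 2 / 24
  have hline : ∀ t : ℝ, boulatovAction a c m2 lam (f + t • Pi.single i 1)
      = (boulatovAction a c m2 lam f - (B * f i ^ 2 + D * f i ^ 4))
        + (fun y : ℝ ↦ B * y ^ 2 + D * y ^ 4) (t + f i) := by
    intro t
    simp only [boulatovAction, Pi.add_apply, Pi.smul_apply, smul_eq_mul]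
    rw [finsum_comp_add_mul_single (fun j y ↦ y ^ 2 * (a j + m2)) (by simp) hf,
      finsum_comp_add_mul_single (fun j y ↦ y ^ 4 * c j ^ 2) (by simp) hf]
    ring
  rw [funext hline, iteratedDeriv_const_add two_pos,
    iteratedDeriv_comp_add_const 2 (fun y : ℝ ↦ B * y ^ 2 + D * y ^ 4)]
  beta_reduce
  rw [zero_add, iteratedDeriv_two_quadratic_add_quartic]
  ring

theorem nontrivial_extrema_are_saddle_points_general (a c : ℕ → ℝ) (ha : ∀ j, 0 ≤ a j)
    (m2 lam : ℝ) (hm2 : 0 < m2) (hlam : lam < 0)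
    (f : ℕ → ℝ) (hfin : (Function.support f).Finite)
    (j₀ : ℕ) (hcj₀ : c j₀ ≠ 0)
    (hext : f j₀ ^ 2 = -6 * (a j₀ + m2) / (lam * c j₀ ^ 2))
    (k : ℕ) (hfk : f k = 0) :
    (iteratedDeriv 2
        (fun t : ℝ =>
          (1 / 2) * ∑ᶠ j, (f j + t * (Pi.single j₀ 1 : ℕ → ℝ) j) ^ 2 * (a j + m2) +
            (lam / 24) * ∑ᶠ j, (f j + t * (Pi.single j₀ 1 : ℕ → ℝ) j) ^ 4 * c j ^ 2) 0 =
        -2 * (a j₀ + m2) ∧ -2 * (a j₀ + m2) < 0) ∧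
    (iteratedDeriv 2
        (fun t : ℝ =>
          (1 / 2) * ∑ᶠ j, (f j + t * (Pi.single k 1 : ℕ → ℝ) j) ^ 2 * (a j + m2) +
            (lam / 24) * ∑ᶠ j, (f j + t * (Pi.single k 1 : ℕ → ℝ) j) ^ 4 * c j ^ 2) 0 =
        a k + m2 ∧ 0 < a k + m2) := by
  refine ⟨⟨?_, by linarith [ha j₀]⟩, ?_, by linarith [ha k]⟩
  · calc _ = a j₀ + m2 + lam * c j₀ ^ 2 * f j₀ ^ 2 / 2 :=
          iteratedDeriv_two_boulatovAction_line a c m2 lam hfin j₀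
      _ = -2 * (a j₀ + m2) := by
          rw [hext]
          field_simp [hlam.ne]
          ring
  · calc _ = a k + m2 + lam * c k ^ 2 * f k ^ 2 / 2 :=
          iteratedDeriv_two_boulatovAction_line a c m2 lam hfin k
      _ = a k + m2 := by rw [hfk]; ring

theorem nontrivial_extrema_are_saddle_points (a c : ℕ → ℝ) (ha : ∀ j, 0 ≤ a j)
    (m2 lam : ℝ) (hm2 : 0 < m2) (hlam : lam < 0)
    (f : ℕ → ℝ) (hfin : (Function.support f).Finite)
    (j₀ : ℕ) (hfj₀ : f j₀ ≠ 0) (hcj₀ : c j₀ ≠ 0)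
    (hext : f j₀ ^ 2 = -6 * (a j₀ + m2) / (lam * c j₀ ^ 2))
    (k : ℕ) (hfk : f k = 0) :
    (iteratedDeriv 2
        (fun t : ℝ =>
          (1 / 2) * ∑ᶠ j, (f j + t * (Pi.single j₀ 1 : ℕ → ℝ) j) ^ 2 * (a j + m2) +
            (lam / 24) * ∑ᶠ j, (f j + t * (Pi.single j₀ 1 : ℕ → ℝ) j) ^ 4 * c j ^ 2) 0 =
        -2 * (a j₀ + m2) ∧ -2 * (a j₀ + m2) < 0) ∧
    (iteratedDeriv 2
        (fun t : ℝ =>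
          (1 / 2) * ∑ᶠ j, (f j + t * (Pi.single k 1 : ℕ → ℝ) j) ^ 2 * (a j + m2) +
            (lam / 24) * ∑ᶠ j, (f j + t * (Pi.single k 1 : ℕ → ℝ) j) ^ 4 * c j ^ 2) 0 =
        a k + m2 ∧ 0 < a k + m2) :=
  nontrivial_extrema_are_saddle_points_general a c ha m2 lam hm2 hlam f hfin j₀ hcj₀ hext k hfk
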